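/- arXiv:2603.04686 — 2 statements merged into one kernel-verified Lean document; each statement's English description precedes it below -/
import Mathlib

section
/- Let I ≥ 0 and for δ ∈ (0,1), k > 0 define α_{δ,k}(t) = e^{−k|t|} for |t| ≤ 1−δ and α_{δ,k}(t) = δ^{-1} e^{−(1−δ)k}(1−|t|) for 1−δ < |t| ≤ 1. Then lim_{δ→0+} (∫_{-1}^1 α_{δ,k}) / (∫_{-1}^1 √(I α_{δ,k}² + (α_{δ,k}')²)) = 1 / (√(I + k²) + k/(e^k − 1)), and lim_{k→0+} of the right-hand side equals 1/(√I + 1). -/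
open MeasureTheory Set Filter

/-- The trapezoidal-exponential augmentation function `α_{δ,k}` of Example 2.3. -/
noncomputable def augFun (δ k t : ℝ) : ℝ :=
  if |t| ≤ 1 - δ then Real.exp (-k * |t|)
  else δ⁻¹ * Real.exp (-(1 - δ) * k) * (1 - |t|)

/-- Its almost-everywhere derivative. -/
noncomputable def augFun' (δ k t : ℝ) : ℝ :=
  if |t| ≤ 1 - δ then -k * Real.sign t * Real.exp (-k * |t|)
  else -Real.sign t * δ⁻¹ * Real.exp (-(1 - δ) * k)

/-!
Both integrands are even in `t`, so it suffices to integrate over `[0, 1]`, where `α_{δ,k}` is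
`e^{-kt}` on `(0, 1-δ]` and linear on `(1-δ, 1]`. With `e = e^{-(1-δ)k}` this gives
`∫₀¹ α = (1-e)/k + δe/2` and `∫₀¹ √(Iα² + α'²) = √(I+k²)(1-e)/k + e · δ⁻¹∫₀^δ √(Is²+1)`.
The last average tends to `1` by the fundamental theorem of calculus. For the limit in `k`,
`k/(e^k - 1)` is the reciprocal of a difference quotient of `exp` at `0`.
-/

open scoped Interval Topology
open intervalIntegral

theorem intervalIntegral.integral_eq_add_of_eqOn_uIoc {f g h : ℝ → ℝ} {a b c : ℝ}
    (hg : IntervalIntegrable g volume a b) (hh : IntervalIntegrable h volume b c)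
    (hfg : EqOn f g (Ι a b)) (hfh : EqOn f h (Ι b c)) :
    ∫ x in a..c, f x = (∫ x in a..b, g x) + ∫ x in b..c, h x := by
  rw [← integral_add_adjacent_intervals (hg.congr hfg.symm) (hh.congr hfh.symm),
    integral_congr_ae (.of_forall hfg), integral_congr_ae (.of_forall hfh)]

theorem intervalIntegral.integral_neg_self_eq_two_mul_of_even {f : ℝ → ℝ} (hf : ∀ x, f (-x) = f x)
    (a : ℝ) : ∫ x in -a..a, f x = 2 * ∫ x in 0..a, f x := by
  by_cases hint : IntervalIntegrable f volume 0 a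
  · have hneg : IntervalIntegrable f volume (-a) 0 := by
      simpa [hf] using ((IntervalIntegrable.iff_comp_neg (f := f)).mp hint).symm
    have hleft : ∫ x in -a..0, f x = ∫ x in 0..a, f x := by
      simpa [hf] using (integral_comp_neg (a := 0) (b := a) f).symm
    rw [← integral_add_adjacent_intervals hneg hint, hleft, two_mul]
  · have hzero : (0 : ℝ) ∈ uIcc (-a) a := by
      rcases le_total 0 a with ha | ha <;> simp [ha]
    have hint' : ¬IntervalIntegrable f volume (-a) a := fun h =>
      hint (h.mono_set (uIcc_subset_uIcc hzero right_mem_uIcc))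
    rw [integral_undef hint, integral_undef hint', mul_zero]

theorem integral_exp_mul {c : ℝ} (hc : c ≠ 0) (a b : ℝ) :
    ∫ x in a..b, Real.exp (c * x) = (Real.exp (c * b) - Real.exp (c * a)) / c := by
  rw [integral_comp_mul_left (fun x => Real.exp x) hc, integral_exp, smul_eq_mul, inv_mul_eq_div]

theorem tendsto_inv_mul_integral_nhdsGT_zero {h : ℝ → ℝ} (hh : Continuous h) :
    Tendsto (fun δ => δ⁻¹ * ∫ s in (0 : ℝ)..δ, h s) (𝓝[>] 0) (𝓝 (h 0)) := by
  simpa using (hh.integral_hasStrictDerivAt 0 0).hasDerivAt.tendsto_slope_zero_right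

theorem tendsto_div_exp_sub_one_nhdsNE_zero :
    Tendsto (fun x => x / (Real.exp x - 1)) (𝓝[≠] 0) (𝓝 1) := by
  have h := (Real.hasDerivAt_exp 0).tendsto_slope_zero.inv₀ (by simp)
  simpa [div_eq_mul_inv, mul_comm] using h

section augFun

variable {δ k : ℝ}

theorem augFun_neg (t : ℝ) : augFun δ k (-t) = augFun δ k t := by
  simp only [augFun, abs_neg]

theorem augFun'_neg (t : ℝ) : augFun' δ k (-t) = -augFun' δ k t := by
  unfold augFun'
  split_ifs <;> simp only [abs_neg, Real.sign_neg] at * <;> first | contradiction | ring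

theorem augFun_eqOn_Ioc_inner :
    EqOn (augFun δ k) (fun t => Real.exp (-k * t)) (Ioc 0 (1 - δ)) := by
  intro t ht
  simp only [augFun, abs_of_pos ht.1, if_pos ht.2]

theorem augFun'_eqOn_Ioc_inner :
    EqOn (augFun' δ k) (fun t => -k * Real.exp (-k * t)) (Ioc 0 (1 - δ)) := by
  intro t ht
  simp only [augFun', abs_of_pos ht.1, if_pos ht.2, Real.sign_of_pos ht.1, mul_one]

theorem augFun_eqOn_Ioc_outer (hδ : δ ≤ 1) :
    EqOn (augFun δ k) (fun t => δ⁻¹ * Real.exp (-(1 - δ) * k) * (1 - t)) (Ioc (1 - δ) 1) := by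
  intro t ht
  have ht0 : 0 < t := by linarith [ht.1]
  simp only [augFun, abs_of_pos ht0, if_neg (not_le.2 ht.1)]

theorem augFun'_eqOn_Ioc_outer (hδ : δ ≤ 1) :
    EqOn (augFun' δ k) (fun _ => -(δ⁻¹ * Real.exp (-(1 - δ) * k))) (Ioc (1 - δ) 1) := by
  intro t ht
  have ht0 : 0 < t := by linarith [ht.1]
  simp only [augFun', abs_of_pos ht0, if_neg (not_le.2 ht.1), Real.sign_of_pos ht0]
  ring

theorem sqrt_augFun_integrand_eqOn_Ioc_inner (I : ℝ) :
    EqOn (fun t => Real.sqrt (I * augFun δ k t ^ 2 + augFun' δ k t ^ 2))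
      (fun t => Real.sqrt (I + k ^ 2) * Real.exp (-k * t)) (Ioc 0 (1 - δ)) := by
  intro t ht
  simp only [augFun_eqOn_Ioc_inner ht, augFun'_eqOn_Ioc_inner ht]
  rw [show I * Real.exp (-k * t) ^ 2 + (-k * Real.exp (-k * t)) ^ 2
      = (I + k ^ 2) * Real.exp (-k * t) ^ 2 by ring,
    Real.sqrt_mul' _ (sq_nonneg _), Real.sqrt_sq (Real.exp_pos _).le]

theorem sqrt_augFun_integrand_eqOn_Ioc_outer (I : ℝ) (hδ0 : 0 < δ) (hδ1 : δ ≤ 1) :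
    EqOn (fun t => Real.sqrt (I * augFun δ k t ^ 2 + augFun' δ k t ^ 2))
      (fun t => δ⁻¹ * Real.exp (-(1 - δ) * k) * Real.sqrt (I * (1 - t) ^ 2 + 1))
      (Ioc (1 - δ) 1) := by
  intro t ht
  simp only [augFun_eqOn_Ioc_outer hδ1 ht, augFun'_eqOn_Ioc_outer hδ1 ht]
  set c := δ⁻¹ * Real.exp (-(1 - δ) * k)
  rw [show I * (c * (1 - t)) ^ 2 + (-c) ^ 2 = c ^ 2 * (I * (1 - t) ^ 2 + 1) by ring,
    Real.sqrt_mul (sq_nonneg _), Real.sqrt_sq (by positivity)]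

theorem integral_augFun_zero_one (hδ0 : 0 < δ) (hδ1 : δ ≤ 1) (hk : k ≠ 0) :
    ∫ t in (0 : ℝ)..1, augFun δ k t
      = (1 - Real.exp (-(1 - δ) * k)) / k + δ * Real.exp (-(1 - δ) * k) / 2 := by
  have h0 : (0 : ℝ) ≤ 1 - δ := by linarith
  have h1 : 1 - δ ≤ 1 := by linarith
  rw [integral_eq_add_of_eqOn_uIoc (Continuous.intervalIntegrable (by fun_prop) _ _)
      (Continuous.intervalIntegrable (by fun_prop) _ _)
      (uIoc_of_le h0 ▸ augFun_eqOn_Ioc_inner) (uIoc_of_le h1 ▸ augFun_eqOn_Ioc_outer hδ1),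
    integral_exp_mul (neg_ne_zero.2 hk), mul_zero, Real.exp_zero,
    intervalIntegral.integral_const_mul, integral_comp_sub_left (fun s => s) 1, integral_id]
  field_simp
  ring

theorem integral_sqrt_augFun_integrand_zero_one (I : ℝ) (hδ0 : 0 < δ) (hδ1 : δ ≤ 1) (hk : k ≠ 0) :
    ∫ t in (0 : ℝ)..1, Real.sqrt (I * augFun δ k t ^ 2 + augFun' δ k t ^ 2)
      = Real.sqrt (I + k ^ 2) * ((1 - Real.exp (-(1 - δ) * k)) / k)
        + Real.exp (-(1 - δ) * k) * (δ⁻¹ * ∫ s in (0 : ℝ)..δ, Real.sqrt (I * s ^ 2 + 1)) := by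
  have h0 : (0 : ℝ) ≤ 1 - δ := by linarith
  have h1 : 1 - δ ≤ 1 := by linarith
  rw [integral_eq_add_of_eqOn_uIoc (Continuous.intervalIntegrable (by fun_prop) _ _)
      (Continuous.intervalIntegrable (by fun_prop) _ _)
      (uIoc_of_le h0 ▸ sqrt_augFun_integrand_eqOn_Ioc_inner I)
      (uIoc_of_le h1 ▸ sqrt_augFun_integrand_eqOn_Ioc_outer I hδ0 hδ1),
    intervalIntegral.integral_const_mul, integral_exp_mul (neg_ne_zero.2 hk), mul_zero,
    Real.exp_zero, intervalIntegral.integral_const_mul,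
    integral_comp_sub_left (fun s => Real.sqrt (I * s ^ 2 + 1)) 1]
  simp only [sub_self, sub_sub_cancel]
  field_simp
  ring

end augFun

theorem tendsto_integral_augFun {k : ℝ} (hk : k ≠ 0) :
    Tendsto (fun δ => ∫ t in (-1 : ℝ)..1, augFun δ k t) (𝓝[>] 0)
      (𝓝 (2 * ((1 - Real.exp (-k)) / k))) := by
  have hlim : Tendsto
      (fun δ => 2 * ((1 - Real.exp (-(1 - δ) * k)) / k + δ * Real.exp (-(1 - δ) * k) / 2))
      (𝓝[>] 0) (𝓝 (2 * ((1 - Real.exp (-k)) / k))) :=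
    (Continuous.tendsto' (by fun_prop) 0 _ (by simp)).mono_left nhdsWithin_le_nhds
  refine hlim.congr' ?_
  filter_upwards [Ioo_mem_nhdsGT one_pos] with δ hδ
  rw [integral_neg_self_eq_two_mul_of_even augFun_neg, integral_augFun_zero_one hδ.1 hδ.2.le hk]

theorem tendsto_integral_sqrt_augFun_integrand (I : ℝ) {k : ℝ} (hk : k ≠ 0) :
    Tendsto (fun δ => ∫ t in (-1 : ℝ)..1, Real.sqrt (I * augFun δ k t ^ 2 + augFun' δ k t ^ 2))
      (𝓝[>] 0) (𝓝 (2 * (Real.sqrt (I + k ^ 2) * ((1 - Real.exp (-k)) / k) + Real.exp (-k)))) := by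
  have hexp : Tendsto (fun δ : ℝ => Real.exp (-(1 - δ) * k)) (𝓝[>] 0) (𝓝 (Real.exp (-k))) :=
    (Continuous.tendsto' (by fun_prop) 0 _ (by simp)).mono_left nhdsWithin_le_nhds
  have havg : Tendsto (fun δ => δ⁻¹ * ∫ s in (0 : ℝ)..δ, Real.sqrt (I * s ^ 2 + 1)) (𝓝[>] 0)
      (𝓝 1) := by
    convert tendsto_inv_mul_integral_nhdsGT_zero
      (h := fun s => Real.sqrt (I * s ^ 2 + 1)) (by fun_prop)
    simp
  have hlim := (((tendsto_const_nhds (x := (1 : ℝ))).sub hexp).div_const k).const_mul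
    (Real.sqrt (I + k ^ 2)) |>.add (hexp.mul havg) |>.const_mul 2
  rw [mul_one] at hlim
  refine hlim.congr' ?_
  filter_upwards [Ioo_mem_nhdsGT one_pos] with δ hδ
  rw [integral_neg_self_eq_two_mul_of_even
      (fun t => by simp only [augFun_neg, augFun'_neg, neg_sq]),
    integral_sqrt_augFun_integrand_zero_one I hδ.1 hδ.2.le hk]

theorem augmentation_limit_general (I k : ℝ) (hk : 0 < k) :
    Tendsto
      (fun δ : ℝ =>
        (∫ t in (-1 : ℝ)..1, augFun δ k t) /
          ∫ t in (-1 : ℝ)..1,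
            Real.sqrt (I * (augFun δ k t) ^ 2 + (augFun' δ k t) ^ 2))
      (nhdsWithin 0 (Ioi 0))
      (nhds (1 / (Real.sqrt (I + k ^ 2) + k / (Real.exp k - 1))))
    ∧ Tendsto
        (fun k : ℝ => 1 / (Real.sqrt (I + k ^ 2) + k / (Real.exp k - 1)))
        (nhdsWithin 0 (Ioi 0))
        (nhds (1 / (Real.sqrt I + 1))) := by
  constructor
  · have hA : 0 < (1 - Real.exp (-k)) / k :=
      div_pos (sub_pos.2 (Real.exp_lt_one_iff.2 (neg_neg_of_pos hk))) hk
    have hval : 2 * ((1 - Real.exp (-k)) / k) /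
          (2 * (Real.sqrt (I + k ^ 2) * ((1 - Real.exp (-k)) / k) + Real.exp (-k)))
        = 1 / (Real.sqrt (I + k ^ 2) + k / (Real.exp k - 1)) := by
      have hek : Real.exp k - 1 ≠ 0 := sub_ne_zero.2 (mt (Real.exp_eq_one_iff k).1 hk.ne')
      rw [Real.exp_neg]
      field_simp
    rw [← hval]
    exact (tendsto_integral_augFun hk.ne').div (tendsto_integral_sqrt_augFun_integrand I hk.ne')
      (by positivity)
  · have hsqrt : Tendsto (fun k : ℝ => Real.sqrt (I + k ^ 2)) (𝓝[>] 0) (𝓝 (Real.sqrt I)) :=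
      (Continuous.tendsto' (by fun_prop) 0 _ (by simp)).mono_left nhdsWithin_le_nhds
    simpa only [one_div] using (hsqrt.add (tendsto_div_exp_sub_one_nhdsNE_zero.mono_left
      (nhdsGT_le_nhdsNE 0))).inv₀ (by positivity)

/-- Limit computation in the proof of the Augmented van Trees 1 bound (Example 2.3):
as `δ → 0⁺`,
`(∫_{-1}^1 α_{δ,k}) / (∫_{-1}^1 √(I α_{δ,k}² + (α_{δ,k}')²)) → 1/(√(I+k²) + k/(e^k - 1))`,
and the right-hand side tends to `1/(√I + 1)` as `k → 0⁺`. -/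
theorem augmentation_limit (I k : ℝ) (hI : 0 ≤ I) (hk : 0 < k) :
    Tendsto
      (fun δ : ℝ =>
        (∫ t in (-1 : ℝ)..1, augFun δ k t) /
          ∫ t in (-1 : ℝ)..1,
            Real.sqrt (I * (augFun δ k t) ^ 2 + (augFun' δ k t) ^ 2))
      (nhdsWithin 0 (Ioi 0))
      (nhds (1 / (Real.sqrt (I + k ^ 2) + k / (Real.exp k - 1))))
    ∧ Tendsto
        (fun k : ℝ => 1 / (Real.sqrt (I + k ^ 2) + k / (Real.exp k - 1)))
        (nhdsWithin 0 (Ioi 0))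
        (nhds (1 / (Real.sqrt I + 1))) :=
  augmentation_limit_general I k hk
end

section
/- For a ∈ (0, 1/2), sup over λ ∈ (0,1] and m > 0 of m² λ^a / ((m+1)² (m² + λ)) equals a^{2a}(1−a)^{2−2a} · a^a (1−a)^{1−a} / 1, i.e. the function Ā(a) := (1/(a^a(1−a)^{1−a})) · sup_{0<λ≤1, m>0} m²λ^a/((m+1)²(m²+λ)) satisfies Ā(a) = a^{2a}(1−a)^{2(1−a)}, with the supremum attained at λ = a³/(1−a)³ and m = a/(1−a). -/
/-!
Write `c = a^a (1-a)^(1-a)`. Weighted AM-GM in the scaled form `x^a y^(1-a) ≤ c (x + y)`,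
applied to `(x, y) = (m, 1)` (squared) and to `(x, y) = (λ, m²)` once, gives
`m² λ^a = (m^a)² · λ^a (m²)^(1-a) ≤ c³ (m+1)² (m² + λ)`.
With `t = a/(1-a)` one has `c = t^a / (t+1)`, and at `m = t`, `λ = t³` the objective is exactly
`t^(3a)/(t+1)³ = c³`; the constraint `λ ≤ 1` is `a ≤ 1/2`.
-/

open Real

lemma rpow_mul_rpow_one_sub_le {a x y : ℝ} (ha : 0 < a) (ha1 : a < 1) (hx : 0 ≤ x)
    (hy : 0 ≤ y) :
    x ^ a * y ^ (1 - a) ≤ a ^ a * (1 - a) ^ (1 - a) * (x + y) := by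
  have h1a : 0 < 1 - a := by linarith
  have amgm := geom_mean_le_arith_mean2_weighted ha.le h1a.le (div_nonneg hx ha.le)
    (div_nonneg hy h1a.le) (add_sub_cancel a 1)
  have hsum : a * (x / a) + (1 - a) * (y / (1 - a)) = x + y := by field_simp
  have hscale : x ^ a * y ^ (1 - a) =
      a ^ a * (1 - a) ^ (1 - a) * ((x / a) ^ a * (y / (1 - a)) ^ (1 - a)) := by
    rw [div_rpow hx ha.le, div_rpow hy h1a.le]
    field_simp
  rw [hscale, ← hsum]
  gcongr

lemma sq_mul_rpow_le {a m l : ℝ} (ha : 0 < a) (ha1 : a < 1) (hm : 0 ≤ m) (hl : 0 ≤ l) :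
    m ^ 2 * l ^ a ≤ (a ^ a * (1 - a) ^ (1 - a)) ^ 3 * ((m + 1) ^ 2 * (m ^ 2 + l)) := by
  set c := a ^ a * (1 - a) ^ (1 - a)
  have hfirst : m ^ a ≤ c * (m + 1) := by
    simpa using rpow_mul_rpow_one_sub_le ha ha1 hm zero_le_one
  have hsecond : l ^ a * (m ^ 2) ^ (1 - a) ≤ c * (m ^ 2 + l) := by
    rw [add_comm (m ^ 2)]
    exact rpow_mul_rpow_one_sub_le ha ha1 hl (sq_nonneg m)
  have hsplit : m ^ 2 * l ^ a = (m ^ a) ^ 2 * (l ^ a * (m ^ 2) ^ (1 - a)) := by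
    have hexp : a * (2 : ℕ) + (2 : ℕ) * (1 - a) = (2 : ℕ) := by push_cast; ring
    rw [← rpow_mul_natCast hm, ← rpow_natCast_mul hm, mul_left_comm,
      ← rpow_add' hm (by rw [hexp]; norm_num), hexp, rpow_natCast, mul_comm]
  calc m ^ 2 * l ^ a = (m ^ a) ^ 2 * (l ^ a * (m ^ 2) ^ (1 - a)) := hsplit
    _ ≤ (c * (m + 1)) ^ 2 * (c * (m ^ 2 + l)) := by gcongr
    _ = c ^ 3 * ((m + 1) ^ 2 * (m ^ 2 + l)) := by ring

lemma rpow_mul_rpow_one_sub_eq {a : ℝ} (ha : 0 < a) (ha1 : a < 1) :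
    a ^ a * (1 - a) ^ (1 - a) = (a / (1 - a)) ^ a / (a / (1 - a) + 1) := by
  have h1a : 0 < 1 - a := by linarith
  rw [div_rpow ha.le h1a.le, rpow_sub h1a, rpow_one]
  field_simp
  ring

lemma objective_at_cube {t : ℝ} (a : ℝ) (ht : 0 < t) :
    t ^ 2 * (t ^ 3) ^ a / ((t + 1) ^ 2 * (t ^ 2 + t ^ 3)) = (t ^ a / (t + 1)) ^ 3 := by
  have hcube : (t ^ 3) ^ a = (t ^ a) ^ 3 := by
    rw [← rpow_natCast_mul ht.le, ← rpow_mul_natCast ht.le, mul_comm]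
  rw [hcube]
  field_simp
  ring

lemma rpow_mul_rpow_one_sub_pow {a : ℝ} (ha : 0 ≤ a) (ha1 : a ≤ 1) (n : ℕ) :
    (a ^ a * (1 - a) ^ (1 - a)) ^ n = a ^ (n * a) * (1 - a) ^ (n * (1 - a)) := by
  rw [mul_pow, mul_comm (n : ℝ), mul_comm (n : ℝ), rpow_mul_natCast ha,
    rpow_mul_natCast (by linarith)]

/-- Optimization from the proof of Theorem 3.2: for `a ∈ (0,1/2)`, the supremum over
`λ ∈ (0,1]`, `m > 0` of `m² λ^a / ((m+1)²(m²+λ))` is attained at `λ = a³/(1-a)³`,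
`m = a/(1-a)`, and dividing the attained value by `a^a (1-a)^(1-a)` gives
`Ā(a) = a^(2a) (1-a)^(2(1-a))`. -/
theorem optimization_lower_bound_constant (a : ℝ) (ha : 0 < a) (ha2 : a < 1 / 2) :
    IsGreatest
        {v : ℝ | ∃ l m : ℝ, 0 < l ∧ l ≤ 1 ∧ 0 < m ∧
          v = m ^ 2 * l ^ a / ((m + 1) ^ 2 * (m ^ 2 + l))}
        ((a / (1 - a)) ^ 2 * (a ^ 3 / (1 - a) ^ 3) ^ a /
          ((a / (1 - a) + 1) ^ 2 * ((a / (1 - a)) ^ 2 + a ^ 3 / (1 - a) ^ 3)))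
    ∧ (1 / (a ^ a * (1 - a) ^ (1 - a))) *
        ((a / (1 - a)) ^ 2 * (a ^ 3 / (1 - a) ^ 3) ^ a /
          ((a / (1 - a) + 1) ^ 2 * ((a / (1 - a)) ^ 2 + a ^ 3 / (1 - a) ^ 3)))
      = a ^ (2 * a) * (1 - a) ^ (2 * (1 - a)) := by
  have ha1 : a < 1 := by linarith
  have h1a : 0 < 1 - a := by linarith
  set t := a / (1 - a)
  have ht : 0 < t := by positivity
  rw [← div_pow]
  have hval : t ^ 2 * (t ^ 3) ^ a / ((t + 1) ^ 2 * (t ^ 2 + t ^ 3)) =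
      (a ^ a * (1 - a) ^ (1 - a)) ^ 3 := by
    rw [objective_at_cube a ht, rpow_mul_rpow_one_sub_eq ha ha1]
  refine ⟨⟨⟨t ^ 3, t, by positivity, ?_, ht, rfl⟩, ?_⟩, ?_⟩
  · exact pow_le_one₀ ht.le ((div_le_one h1a).2 (by linarith))
  · rintro v ⟨l, m, hl, -, hm, rfl⟩
    rw [hval, div_le_iff₀ (by positivity)]
    exact sq_mul_rpow_le ha ha1 hm.le hl.le
  · have hc : 0 < a ^ a * (1 - a) ^ (1 - a) := by positivity
    rw [hval, one_div_mul_eq_div, pow_succ', mul_div_cancel_left₀ _ hc.ne',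
      rpow_mul_rpow_one_sub_pow ha.le ha1.le]
    norm_num
end
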